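/- In a nilpotent differential graded Lie algebra L over a field of characteristic 0, the gauge action preserves the Maurer–Cartan equation: if ω ∈ L^1 satisfies dω + ½[ω,ω] = 0 and g = exp(x) for x ∈ L^0, then g(ω) := g·ω·g⁻¹ − (dg)·g⁻¹ (computed in the universal enveloping algebra of L) again satisfies d(g(ω)) + ½[g(ω),g(ω)] = 0. -/

import Mathlib

/-!
Conjugation by a unit `g` of degree `0` commutes with `d` up to a correction term: with
`θ = dg · g⁻¹` and `η = gωg⁻¹` one has `g · dω · g⁻¹ = dη - (θη + ηθ)` and `dθ = θ²`, both
from `d(g⁻¹) = -g⁻¹ · dg · g⁻¹`. Hence `d(η - θ) + (η - θ)² = g (dω + ω²) g⁻¹`, so the gauge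
action by any unit of degree `0`, such as `exp x`, preserves the Maurer–Cartan equation.
-/

lemma inv_two_smul_add_self {k M : Type*} [DivisionRing k] [NeZero (2 : k)] [AddCommMonoid M]
    [Module k M] (y : M) : (2 : k)⁻¹ • (y + y) = y := by
  rw [← two_smul k y, smul_smul, inv_mul_cancel₀ two_ne_zero, one_smul]

section GradedDifferential

variable {k A : Type*} [Field k] [Ring A] [Algebra k A] {𝒜 : ℤ → Submodule k A}
  {d : A →ₗ[k] A}

/-- In the degree-`1` part of the enveloping algebra, `½[ω, ω] = ω²`. -/
def IsMaurerCartan (d : A →ₗ[k] A) (ω : A) : Prop :=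
  d ω + ω * ω = 0

def gaugeAction (d : A →ₗ[k] A) (g : Aˣ) (ω : A) : A :=
  g * ω * ↑g⁻¹ - d g * ↑g⁻¹

lemma map_mul_of_mem_zero
    (hd_leibniz : ∀ (i : ℤ), ∀ a ∈ 𝒜 i, ∀ b : A,
      d (a * b) = d a * b + ((-1 : k) ^ i) • (a * d b))
    {a : A} (ha : a ∈ 𝒜 0) (b : A) : d (a * b) = d a * b + a * d b := by
  simpa using hd_leibniz 0 a ha b

lemma map_mul_of_mem_one
    (hd_leibniz : ∀ (i : ℤ), ∀ a ∈ 𝒜 i, ∀ b : A,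
      d (a * b) = d a * b + ((-1 : k) ^ i) • (a * d b))
    {a : A} (ha : a ∈ 𝒜 1) (b : A) : d (a * b) = d a * b - a * d b := by
  simpa [sub_eq_add_neg] using hd_leibniz 1 a ha b

variable [SetLike.GradedOne 𝒜]

lemma map_one_of_leibniz
    (hd_leibniz : ∀ (i : ℤ), ∀ a ∈ 𝒜 i, ∀ b : A,
      d (a * b) = d a * b + ((-1 : k) ^ i) • (a * d b)) :
    d 1 = 0 := by
  simpa using map_mul_of_mem_zero hd_leibniz (SetLike.one_mem_graded 𝒜) 1

lemma map_units_inv_of_leibniz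
    (hd_leibniz : ∀ (i : ℤ), ∀ a ∈ 𝒜 i, ∀ b : A,
      d (a * b) = d a * b + ((-1 : k) ^ i) • (a * d b))
    {g : Aˣ} (hg : (g : A) ∈ 𝒜 0) : d ↑g⁻¹ = -(↑g⁻¹ * (d g * ↑g⁻¹)) := by
  have h : d g * ↑g⁻¹ + g * d ↑g⁻¹ = 0 := by
    rw [← map_mul_of_mem_zero hd_leibniz hg, Units.mul_inv, map_one_of_leibniz hd_leibniz]
  rw [← Units.inv_mul_cancel_left g (d ↑g⁻¹), eq_neg_of_add_eq_zero_right h, mul_neg]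

theorem IsMaurerCartan.gaugeAction
    (hd_deg : ∀ (i : ℤ), ∀ a ∈ 𝒜 i, d a ∈ 𝒜 (i + 1))
    (hd_sq : ∀ a : A, d (d a) = 0)
    (hd_leibniz : ∀ (i : ℤ), ∀ a ∈ 𝒜 i, ∀ b : A,
      d (a * b) = d a * b + ((-1 : k) ^ i) • (a * d b))
    {g : Aˣ} (hg : (g : A) ∈ 𝒜 0) {ω : A} (hω : ω ∈ 𝒜 1) (hMC : IsMaurerCartan d ω) :
    IsMaurerCartan d (gaugeAction d g ω) := by
  have hdg : d g ∈ 𝒜 1 := by simpa using hd_deg 0 g hg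
  have h_conj :
      d (g * ω * ↑g⁻¹) = d g * (ω * ↑g⁻¹) + g * (d ω * ↑g⁻¹) - g * (ω * d ↑g⁻¹) := by
    rw [mul_assoc, map_mul_of_mem_zero hd_leibniz hg, map_mul_of_mem_one hd_leibniz hω, mul_sub]
    abel
  have h_correction : d (d g * ↑g⁻¹) = -(d g * d ↑g⁻¹) := by
    rw [map_mul_of_mem_one hd_leibniz hdg, hd_sq, zero_mul, zero_sub]
  unfold IsMaurerCartan _root_.gaugeAction
  rw [map_sub, h_conj, h_correction, map_units_inv_of_leibniz hd_leibniz hg,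
    eq_neg_of_add_eq_zero_left hMC]
  simp only [mul_sub, sub_mul, mul_neg, neg_mul, mul_assoc, Units.inv_mul_cancel_left,
    neg_neg, sub_neg_eq_add]
  abel

end GradedDifferential

theorem gauge_action_preserves_maurerCartan_general
    (k : Type) [Field k] [CharZero k]
    (A : Type) [Ring A] [Algebra k A]
    (𝒜 : ℤ → Submodule k A) [GradedAlgebra 𝒜]
    -- the differential: `k`-linear, degree `+1`, square zero, graded Leibniz rule
    (d : A →ₗ[k] A)
    (hd_deg : ∀ (i : ℤ), ∀ a ∈ 𝒜 i, d a ∈ 𝒜 (i + 1))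
    (hd_sq : ∀ a : A, d (d a) = 0)
    (hd_leibniz : ∀ (i : ℤ), ∀ a ∈ 𝒜 i, ∀ b : A,
      d (a * b) = d a * b + ((-1 : k) ^ i) • (a * d b))
    -- the Maurer–Cartan element `ω` of degree 1
    (ω : A) (hω : ω ∈ 𝒜 1)
    (hMC : d ω + (2 : k)⁻¹ • (ω * ω + ω * ω) = 0)
    -- the gauge element `g = exp x` for a nilpotent `x` of degree 0
    (x : A) (hx : x ∈ 𝒜 0) (n : ℕ)
    (g : Aˣ) (hg : (g : A) = ∑ i ∈ Finset.range n, ((Nat.factorial i : k))⁻¹ • x ^ i) :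
    d ((g : A) * ω * ((g⁻¹ : Aˣ) : A) - d (g : A) * ((g⁻¹ : Aˣ) : A)) +
      (2 : k)⁻¹ • (((g : A) * ω * ((g⁻¹ : Aˣ) : A) - d (g : A) * ((g⁻¹ : Aˣ) : A)) *
            ((g : A) * ω * ((g⁻¹ : Aˣ) : A) - d (g : A) * ((g⁻¹ : Aˣ) : A)) +
          ((g : A) * ω * ((g⁻¹ : Aˣ) : A) - d (g : A) * ((g⁻¹ : Aˣ) : A)) *
            ((g : A) * ω * ((g⁻¹ : Aˣ) : A) - d (g : A) * ((g⁻¹ : Aˣ) : A))) = 0 := by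
  have hg0 : (g : A) ∈ 𝒜 0 := hg ▸ (SetLike.GradeZero.subalgebra 𝒜).sum_mem fun i _ =>
    Subalgebra.smul_mem _ (Subalgebra.pow_mem _ hx i) _
  rw [inv_two_smul_add_self] at hMC ⊢
  exact IsMaurerCartan.gaugeAction hd_deg hd_sq hd_leibniz hg0 hω hMC

/-- In a nilpotent differential graded Lie algebra `L` over a field of
characteristic 0, the gauge action preserves the Maurer–Cartan equation.  All computations
take place in the (completed) universal enveloping algebra of `L`, modelled here as a
`ℤ`-graded associative algebra `A` with grading `𝒜`, equipped with a degree `+1`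
differential `d` satisfying `d² = 0` and the graded Leibniz rule; for `ω` of degree 1 one
has `½[ω,ω] = ½(ω·ω + ω·ω) = ω·ω`.  If `ω ∈ L¹ ⊆ 𝒜 1` satisfies the Maurer–Cartan
equation `dω + ½[ω,ω] = 0` and `g = exp(x)` for a nilpotent `x ∈ L⁰ ⊆ 𝒜 0`, then
`g(ω) := g·ω·g⁻¹ − (dg)·g⁻¹` again satisfies the Maurer–Cartan equation. -/
theorem gauge_action_preserves_maurerCartan
    (k : Type) [Field k] [CharZero k]
    (A : Type) [Ring A] [Algebra k A]
    (𝒜 : ℤ → Submodule k A) [GradedAlgebra 𝒜]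
    -- the differential: `k`-linear, degree `+1`, square zero, graded Leibniz rule
    (d : A →ₗ[k] A)
    (hd_deg : ∀ (i : ℤ), ∀ a ∈ 𝒜 i, d a ∈ 𝒜 (i + 1))
    (hd_sq : ∀ a : A, d (d a) = 0)
    (hd_leibniz : ∀ (i : ℤ), ∀ a ∈ 𝒜 i, ∀ b : A,
      d (a * b) = d a * b + ((-1 : k) ^ i) • (a * d b))
    -- the Maurer–Cartan element `ω` of degree 1
    (ω : A) (hω : ω ∈ 𝒜 1)
    (hMC : d ω + (2 : k)⁻¹ • (ω * ω + ω * ω) = 0)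
    -- the gauge element `g = exp x` for a nilpotent `x` of degree 0
    (x : A) (hx : x ∈ 𝒜 0) (n : ℕ) (hxn : x ^ n = 0)
    (g : Aˣ) (hg : (g : A) = ∑ i ∈ Finset.range n, ((Nat.factorial i : k))⁻¹ • x ^ i) :
    d ((g : A) * ω * ((g⁻¹ : Aˣ) : A) - d (g : A) * ((g⁻¹ : Aˣ) : A)) +
      (2 : k)⁻¹ • (((g : A) * ω * ((g⁻¹ : Aˣ) : A) - d (g : A) * ((g⁻¹ : Aˣ) : A)) *
            ((g : A) * ω * ((g⁻¹ : Aˣ) : A) - d (g : A) * ((g⁻¹ : Aˣ) : A)) +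
          ((g : A) * ω * ((g⁻¹ : Aˣ) : A) - d (g : A) * ((g⁻¹ : Aˣ) : A)) *
            ((g : A) * ω * ((g⁻¹ : Aˣ) : A) - d (g : A) * ((g⁻¹ : Aˣ) : A))) = 0 :=
  gauge_action_preserves_maurerCartan_general k A 𝒜 d hd_deg hd_sq hd_leibniz ω hω hMC x hx n g hg
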